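/- Let (V, M) be a valuation domain with residue field k and fraction field K, let π : V → k be the residue map, and let D be an integral domain that is a subring of k. Then the set of overrings of D ×_k V = π⁻¹(D) (subrings of K containing π⁻¹(D)) is exactly the union of the set of overrings of V (subrings of K containing V) and the set of subrings of V of the form π⁻¹(B), where B ranges over the subrings of k containing D. In particular, every overring S of π⁻¹(D) with S ⊆ V equals π⁻¹(S/M), where S/M is a subring of k containing D. -/
import Mathlib


/-- Let `(V, M)` be a valuation domain with residue field `k`, residue map `π`, and
fraction field `K`, and let `D` be an integral domain that is a subring of `k`. The
overrings of `A = π⁻¹(D)` are exactly the overrings of `V` together with the pullbacks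
`π⁻¹(B)` for subrings `B` of `k` containing `D`; in particular every overring `S` of `A`
with `S ⊆ V` equals `π⁻¹(S/M)`, where `S/M` (the image of `S` under `π`) is a subring of
`k` containing `D`. -/
theorem stmt_8 {K k : Type*} [Field K] [Field k] (V : Subring K)
    [ValuationRing V] [IsFractionRing V K]
    (π : V →+* k) (hπ : Function.Surjective π)
    (hker : RingHom.ker π = IsLocalRing.maximalIdeal V)
    (D : Subring k) :
    (∀ S : Subring K,
        (D.comap π).map V.subtype ≤ S ↔
          (V ≤ S ∨ ∃ B : Subring k, D ≤ B ∧ S = (B.comap π).map V.subtype)) ∧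
    (∀ S : Subring K, (D.comap π).map V.subtype ≤ S → S ≤ V →
        D ≤ (S.comap V.subtype).map π ∧
          S = (((S.comap V.subtype).map π).comap π).map V.subtype) := by
  -- nonunits of V lie in A
  have hMA : ∀ v : V, ¬IsUnit v → (v : K) ∈ (D.comap π).map V.subtype := by
    intro v hv
    refine ⟨v, ?_, rfl⟩
    have hvM : v ∈ RingHom.ker π := by
      rw [hker]; exact (IsLocalRing.mem_maximalIdeal v).mpr (mem_nonunits_iff.mpr hv)
    rw [RingHom.mem_ker] at hvM
    show π v ∈ D
    rw [hvM]; exact D.zero_mem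
  -- key: if S contains A and some element outside V, then V ≤ S
  have key : ∀ S : Subring K, (D.comap π).map V.subtype ≤ S →
      ∀ s ∈ S, s ∉ V → V ≤ S := by
    intro S hAS s hsS hsV x hxV
    have hs0 : s ≠ 0 := fun h => hsV (h ▸ V.zero_mem)
    have hinv : s⁻¹ ∈ V := by
      rcases ValuationRing.isInteger_or_isInteger V s with ⟨r, hr⟩ | ⟨r, hr⟩
      · exact absurd (hr ▸ r.2) hsV
      · exact hr ▸ r.2
    have hnon : ¬IsUnit (⟨s⁻¹, hinv⟩ : V) := by
      rintro ⟨u, hu⟩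
      apply hsV
      have h2 : ((u : V) : K) * (((u⁻¹ : Vˣ) : V) : K) = 1 := by
        exact_mod_cast congrArg Subtype.val u.mul_inv
      rw [hu] at h2
      have h2' : s⁻¹ * (((u⁻¹ : Vˣ) : V) : K) = 1 := h2
      have h3 := inv_eq_of_mul_eq_one_right h2'
      rw [inv_inv] at h3
      rw [h3]
      exact ((u⁻¹ : Vˣ) : V).2
    have hmul : ¬IsUnit ((⟨x, hxV⟩ : V) * ⟨s⁻¹, hinv⟩) := fun h =>
      hnon (isUnit_of_mul_isUnit_right h)
    have hxs : x * s⁻¹ ∈ S := hAS (hMA _ hmul)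
    have : x = x * s⁻¹ * s := by field_simp
    rw [this]; exact S.mul_mem hxs hsS
  -- A ≤ V
  have hAV : (D.comap π).map V.subtype ≤ V := by
    rintro x ⟨v, _, rfl⟩; exact v.2
  -- second part
  have part2 : ∀ S : Subring K, (D.comap π).map V.subtype ≤ S → S ≤ V →
      D ≤ (S.comap V.subtype).map π ∧
        S = (((S.comap V.subtype).map π).comap π).map V.subtype := by
    intro S hAS hSV
    constructor
    · intro d hd
      obtain ⟨v, rfl⟩ := hπ d
      exact ⟨v, hAS ⟨v, hd, rfl⟩, rfl⟩
    · apply le_antisymm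
      · intro x hxS
        have hxV := hSV hxS
        exact ⟨⟨x, hxV⟩, ⟨⟨x, hxV⟩, hxS, rfl⟩, rfl⟩
      · rintro x ⟨v, hv, rfl⟩
        obtain ⟨w, hwS, hw⟩ := hv
        have hd : ((v - w : V) : K) ∈ (D.comap π).map V.subtype := by
          refine ⟨v - w, ?_, rfl⟩
          show π (v - w) ∈ D
          rw [map_sub, hw, sub_self]
          exact D.zero_mem
        have h1 : ((v : K) - w) ∈ S := by
          have := hAS hd
          simpa using this
        have h2 : (v : K) = ((v : K) - w) + w := by ring
        show (v : K) ∈ S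
        rw [h2]; exact S.add_mem h1 hwS
  refine ⟨?_, part2⟩
  intro S
  constructor
  · intro hAS
    by_cases hSV : S ≤ V
    · obtain ⟨hDB, hSeq⟩ := part2 S hAS hSV
      exact Or.inr ⟨_, hDB, hSeq⟩
    · obtain ⟨s, hsS, hsV⟩ := SetLike.not_le_iff_exists.mp hSV
      exact Or.inl (key S hAS s hsS hsV)
  · rintro (hVS | ⟨B, hDB, rfl⟩)
    · exact le_trans hAV hVS
    · rintro x ⟨v, hv, rfl⟩
      exact ⟨v, hDB hv, rfl⟩
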